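/- arXiv:2509.23249 — 3 statements merged into one kernel-verified Lean document; each statement's English description precedes it below -/
import Mathlib

section
/- Let Q_A be a real n×k matrix and Q_B a real n×p matrix with orthonormal columns and p ≤ k. Then L₁ := p − ‖Q_Bᵀ Q_A‖_F² satisfies L₁ ≥ 0, and L₁ = 0 if and only if the column space of Q_B is contained in the column space of Q_A. -/
/-!
As `Q_A` has orthonormal columns, `Q_A Q_Aᵀ` is the orthogonal projection onto its column space.
The residual `C = Q_B - Q_A Q_Aᵀ Q_B` satisfies `CᵀC = Q_BᵀQ_B - (Q_AᵀQ_B)ᵀ(Q_AᵀQ_B)`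
(Pythagoras), so taking traces gives `L₁ = ‖C‖_F² ≥ 0`. Equality holds iff `C = 0`, i.e. iff every
column of `Q_B` is its own projection onto the column space of `Q_A`.
-/

open Matrix

namespace Matrix

variable {m n l R : Type*} [Fintype m] [Fintype n]

lemma trace_transpose_mul_self_nonneg (M : Matrix m n ℝ) : 0 ≤ (Mᵀ * M).trace := by
  simpa only [conjTranspose_eq_transpose_of_trivial] using
    (posSemidef_conjTranspose_mul_self M).trace_nonneg

lemma trace_transpose_mul_self_eq_zero_iff {M : Matrix m n ℝ} : (Mᵀ * M).trace = 0 ↔ M = 0 := by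
  simpa only [conjTranspose_eq_transpose_of_trivial] using
    trace_conjTranspose_mul_self_eq_zero_iff (A := M)

section CommRing

variable [CommRing R] [DecidableEq n] {A : Matrix m n R}

def projResidual (A : Matrix m n R) (B : Matrix m l R) : Matrix m l R := B - A * (Aᵀ * B)

lemma transpose_mul_self_projResidual (hA : Aᵀ * A = 1) (B : Matrix m l R) :
    (projResidual A B)ᵀ * projResidual A B = Bᵀ * B - (Aᵀ * B)ᵀ * (Aᵀ * B) := by
  have hAA : Aᵀ * (A * (Aᵀ * B)) = Aᵀ * B := by rw [← Matrix.mul_assoc, hA, Matrix.one_mul]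
  simp only [projResidual, transpose_sub, transpose_mul, transpose_transpose, Matrix.sub_mul,
    Matrix.mul_sub, Matrix.mul_assoc, hAA]
  abel

lemma projResidual_eq_zero_iff [Fintype l] (hA : Aᵀ * A = 1) {B : Matrix m l R} :
    projResidual A B = 0 ↔ LinearMap.range B.mulVecLin ≤ LinearMap.range A.mulVecLin := by
  rw [projResidual, sub_eq_zero]
  constructor
  · intro h
    rw [h, mulVecLin_mul]
    exact LinearMap.range_comp_le_range _ _
  · intro h
    refine ext_iff_mulVec.2 fun v => ?_
    obtain ⟨w, hw⟩ := h ⟨v, rfl⟩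
    rw [mulVecLin_apply, mulVecLin_apply] at hw
    rw [← mulVec_mulVec, ← mulVec_mulVec, ← hw, mulVec_mulVec (M := Aᵀ), hA, one_mulVec]

end CommRing

end Matrix

theorem loss_nonneg_and_zero_iff_subspace_general {n k p : ℕ}
    (QA : Matrix (Fin n) (Fin k) ℝ) (QB : Matrix (Fin n) (Fin p) ℝ)
    (hA : QAᵀ * QA = 1) (hB : QBᵀ * QB = 1) :
    0 ≤ (p : ℝ) - Matrix.trace ((QBᵀ * QA)ᵀ * (QBᵀ * QA)) ∧
    ((p : ℝ) - Matrix.trace ((QBᵀ * QA)ᵀ * (QBᵀ * QA)) = 0 ↔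
      LinearMap.range QB.mulVecLin ≤ LinearMap.range QA.mulVecLin) := by
  have hloss : (p : ℝ) - ((QBᵀ * QA)ᵀ * (QBᵀ * QA)).trace =
      ((projResidual QA QB)ᵀ * projResidual QA QB).trace := by
    rw [transpose_mul_self_projResidual hA, trace_sub, hB, trace_one, Fintype.card_fin,
      transpose_mul, transpose_mul, transpose_transpose, transpose_transpose, trace_mul_comm,
      Matrix.mul_assoc]
  rw [hloss, trace_transpose_mul_self_eq_zero_iff, projResidual_eq_zero_iff hA]
  exact ⟨trace_transpose_mul_self_nonneg _, Iff.rfl⟩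

/-- For `Q_A` n×k and `Q_B` n×p with orthonormal columns and `p ≤ k`, the loss
`L₁ = p − ‖Q_Bᵀ Q_A‖_F²` is nonnegative, and it vanishes iff the column space of
`Q_B` is contained in the column space of `Q_A`. -/
theorem loss_nonneg_and_zero_iff_subspace {n k p : ℕ}
    (QA : Matrix (Fin n) (Fin k) ℝ) (QB : Matrix (Fin n) (Fin p) ℝ)
    (hA : QAᵀ * QA = 1) (hB : QBᵀ * QB = 1) (hpk : p ≤ k) :
    0 ≤ (p : ℝ) - Matrix.trace ((QBᵀ * QA)ᵀ * (QBᵀ * QA)) ∧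
    ((p : ℝ) - Matrix.trace ((QBᵀ * QA)ᵀ * (QBᵀ * QA)) = 0 ↔
      LinearMap.range QB.mulVecLin ≤ LinearMap.range QA.mulVecLin) :=
  loss_nonneg_and_zero_iff_subspace_general QA QB hA hB
end

section
/- Let A₀, U be real n×k matrices with A₀ᵀA₀ = I_k, UᵀU = I_k, A₀ᵀU = 0, let Y be a real orthogonal k×k matrix with columns y₁,…,y_k, let u₁,…,u_k be the columns of U, and let σ₁,…,σ_k ≥ 0 with σ₁ > 0. Define the n×(k+1) matrix B(t) whose first k-column block is A₀(y₁y₁ᵀ + Σ_{i=2}^{k} cos(σᵢt) yᵢyᵢᵀ) + Σ_{i=2}^{k} sin(σᵢt) uᵢyᵢᵀ and whose last column is u₁. Then for every t: B(t)ᵀB(t) = I_{k+1}, and ‖B′(t)‖_F² = σ₂² + ⋯ + σ_k² = (σ₁² + ⋯ + σ_k²) − σ₁². -/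
open Matrix

/-- Embedded geodesic: with `A₀ᵀA₀ = I`, `UᵀU = I`, `A₀ᵀU = 0`, `Y` orthogonal with
columns `yᵢ`, `uᵢ` the columns of `U`, `σᵢ ≥ 0` and `σ₁ > 0`, the n×(k+1) matrix `B(t)`
whose first k columns form
`A₀(y₁y₁ᵀ + Σ_{i≠1} cos(σᵢt) yᵢyᵢᵀ) + Σ_{i≠1} sin(σᵢt) uᵢyᵢᵀ` and whose last column is
`u₁` has orthonormal columns for every `t`, and its entrywise derivative satisfies
`‖B′(t)‖_F² = Σ_{i≠1} σᵢ² = (Σᵢ σᵢ²) − σ₁²`. -/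
theorem embedded_geodesic_orthonormal_and_speed {n k : ℕ} (hk : 0 < k)
    (A0 U : Matrix (Fin n) (Fin k) ℝ) (Y : Matrix (Fin k) (Fin k) ℝ) (σ : Fin k → ℝ)
    (hA0 : A0ᵀ * A0 = 1) (hU : Uᵀ * U = 1) (hAU : A0ᵀ * U = 0) (hY : Yᵀ * Y = 1)
    (hσ : ∀ i, 0 ≤ σ i) (hσ1 : 0 < σ ⟨0, hk⟩)
    (B : ℝ → Matrix (Fin n) (Fin (k + 1)) ℝ)
    (hBdef : ∀ t, B t = Matrix.of fun r (c : Fin (k + 1)) =>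
      if hc : (c : ℕ) < k then
        (A0 * (Matrix.vecMulVec (fun a => Y a ⟨0, hk⟩) (fun a => Y a ⟨0, hk⟩)
            + ∑ i ∈ Finset.univ.erase (⟨0, hk⟩ : Fin k),
                Real.cos (σ i * t) • Matrix.vecMulVec (fun a => Y a i) (fun a => Y a i))
          + ∑ i ∈ Finset.univ.erase (⟨0, hk⟩ : Fin k),
              Real.sin (σ i * t) • Matrix.vecMulVec (fun a => U a i) (fun a => Y a i))
          r ⟨(c : ℕ), hc⟩
      else U r ⟨0, hk⟩)
    (B' : ℝ → Matrix (Fin n) (Fin (k + 1)) ℝ)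
    (hB' : ∀ t r c, HasDerivAt (fun s => B s r c) (B' t r c) t) :
    ∀ t, (B t)ᵀ * B t = 1 ∧
      Matrix.trace ((B' t)ᵀ * B' t) = ∑ i ∈ Finset.univ.erase (⟨0, hk⟩ : Fin k), (σ i) ^ 2 ∧
      Matrix.trace ((B' t)ᵀ * B' t) = (∑ i, (σ i) ^ 2) - (σ ⟨0, hk⟩) ^ 2 := by
  intro t
  set z : Fin k := ⟨0, hk⟩ with hzdef
  set V : Matrix (Fin n) (Fin k) ℝ := A0 * Y with hVdef
  have hVapp : ∀ (r : Fin n) (i : Fin k), V r i = ∑ a, A0 r a * Y a i := fun r i => by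
    rw [hVdef, Matrix.mul_apply]
  -- orthonormality delta facts
  have hVV : ∀ i j, ∑ r, V r i * V r j = if i = j then 1 else 0 := by
    intro i j
    have h1 : Vᵀ * V = 1 := by
      rw [hVdef, transpose_mul, Matrix.mul_assoc, ← Matrix.mul_assoc A0ᵀ, hA0,
        Matrix.one_mul, hY]
    have h2 := congrFun (congrFun h1 i) j
    simpa [Matrix.mul_apply, Matrix.transpose_apply, Matrix.one_apply] using h2
  have hVU : ∀ i j, ∑ r, V r i * U r j = 0 := by
    intro i j
    have h1 : Vᵀ * U = 0 := by
      rw [hVdef, transpose_mul, Matrix.mul_assoc, hAU, Matrix.mul_zero]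
    have h2 := congrFun (congrFun h1 i) j
    simpa [Matrix.mul_apply, Matrix.transpose_apply] using h2
  have hUU : ∀ i j, ∑ r, U r i * U r j = if i = j then 1 else 0 := by
    intro i j
    have h2 := congrFun (congrFun hU i) j
    simpa [Matrix.mul_apply, Matrix.transpose_apply, Matrix.one_apply] using h2
  have hYr : ∀ a b, ∑ i, Y a i * Y b i = if a = b then 1 else 0 := by
    intro a b
    have h1 : Y * Yᵀ = 1 := mul_eq_one_comm.mp hY
    have h2 := congrFun (congrFun h1 a) b
    simpa [Matrix.mul_apply, Matrix.transpose_apply, Matrix.one_apply] using h2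
  have hYc : ∀ i, ∑ a, Y a i * Y a i = 1 := by
    intro i
    have h2 := congrFun (congrFun hY i) i
    simpa [Matrix.mul_apply, Matrix.transpose_apply, Matrix.one_apply] using h2
  -- key inner product computation for columns of the form ∑ᵢ (cfᵢ Vᵢ + sfᵢ Uᵢ)
  have inner : ∀ (cf sf cg sg : Fin k → ℝ) (i i' : Fin k),
      ∑ r, (cf i * V r i + sf i * U r i) * (cg i' * V r i' + sg i' * U r i')
        = if i = i' then cf i * cg i' + sf i * sg i' else 0 := by
    intro cf sf cg sg i i'
    have e1 : ∀ r : Fin n, (cf i * V r i + sf i * U r i) * (cg i' * V r i' + sg i' * U r i')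
        = (cf i * cg i') * (V r i * V r i') + (cf i * sg i') * (V r i * U r i')
          + (sf i * cg i') * (V r i' * U r i) + (sf i * sg i') * (U r i * U r i') := by
      intro r; ring
    rw [Finset.sum_congr rfl fun r _ => e1 r]
    rw [Finset.sum_add_distrib, Finset.sum_add_distrib, Finset.sum_add_distrib,
      ← Finset.mul_sum, ← Finset.mul_sum, ← Finset.mul_sum, ← Finset.mul_sum,
      hVV, hVU, hVU, hUU]
    by_cases h : i = i' <;> simp [h] <;> ring
  have key : ∀ cf sf cg sg : Fin k → ℝ,
      ∑ r, (∑ i, (cf i * V r i + sf i * U r i)) * (∑ i, (cg i * V r i + sg i * U r i))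
        = ∑ i, (cf i * cg i + sf i * sg i) := by
    intro cf sf cg sg
    simp only [Finset.sum_mul, Finset.mul_sum]
    rw [Finset.sum_comm]
    refine Finset.sum_congr rfl fun i _ => ?_
    rw [Finset.sum_comm]
    rw [Finset.sum_congr rfl fun i' _ => inner cf sf cg sg i' i]
    simp
  -- canonical form of column entries (first k columns)
  have hz0 : ∀ (s : ℝ) (r : Fin n) (c : Fin (k+1)) (hc : (c : ℕ) < k),
      B s r c = Y ⟨(c : ℕ), hc⟩ z * V r z
        + ∑ i ∈ Finset.univ.erase z,
            (Real.cos (σ i * s) * (Y ⟨(c : ℕ), hc⟩ i * V r i)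
              + Real.sin (σ i * s) * (Y ⟨(c : ℕ), hc⟩ i * U r i)) := by
    intro s r c hc
    rw [hBdef]
    simp only [Matrix.of_apply]
    rw [dif_pos hc]
    set j : Fin k := ⟨(c : ℕ), hc⟩ with hj
    have E1 : ∑ a, A0 r a * (Y a z * Y j z) = Y j z * V r z := by
      rw [hVapp, Finset.mul_sum]
      exact Finset.sum_congr rfl fun a _ => by ring
    have E2 : (∑ a, A0 r a * ∑ i ∈ Finset.univ.erase z, Real.cos (σ i * s) * (Y a i * Y j i))
        = ∑ i ∈ Finset.univ.erase z, Real.cos (σ i * s) * (Y j i * V r i) := by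
      simp only [Finset.mul_sum]
      rw [Finset.sum_comm]
      refine Finset.sum_congr rfl fun i _ => ?_
      rw [hVapp, Finset.mul_sum, Finset.mul_sum]
      exact Finset.sum_congr rfl fun a _ => by ring
    have E3 : (∑ i ∈ Finset.univ.erase z, Real.sin (σ i * s) * (U r i * Y j i))
        = ∑ i ∈ Finset.univ.erase z, Real.sin (σ i * s) * (Y j i * U r i) :=
      Finset.sum_congr rfl fun i _ => by ring
    simp only [Matrix.add_apply, Matrix.mul_apply, Matrix.sum_apply, Matrix.smul_apply,
      Matrix.vecMulVec_apply, smul_eq_mul]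
    simp only [mul_add, Finset.sum_add_distrib]
    rw [E1, E2, E3]
    ring
  -- column coefficient functions
  set CF : ℝ → Fin (k+1) → Fin k → ℝ := fun s c i =>
    if hc : (c : ℕ) < k then Y ⟨(c : ℕ), hc⟩ i * (if i = z then 1 else Real.cos (σ i * s))
    else 0 with hCF
  set SF : ℝ → Fin (k+1) → Fin k → ℝ := fun s c i =>
    if hc : (c : ℕ) < k then Y ⟨(c : ℕ), hc⟩ i * (if i = z then 0 else Real.sin (σ i * s))
    else (if i = z then 1 else 0) with hSF
  have hBcol : ∀ (s : ℝ) (r : Fin n) (c : Fin (k+1)),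
      B s r c = ∑ i, (CF s c i * V r i + SF s c i * U r i) := by
    intro s r c
    by_cases hc : (c : ℕ) < k
    · rw [hz0 s r c hc, ← Finset.add_sum_erase _ _ (Finset.mem_univ z)]
      congr 1
      · simp [hCF, hSF, hc]
      · refine Finset.sum_congr rfl fun i hi => ?_
        have hiz : i ≠ z := Finset.ne_of_mem_erase hi
        simp only [hCF, hSF, dif_pos hc, if_neg hiz]
        ring
    · rw [hBdef]
      simp only [Matrix.of_apply]
      rw [dif_neg hc]
      simp [hCF, hSF, hc]
  set CF' : Fin (k+1) → Fin k → ℝ := fun c i =>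
    if hc : (c : ℕ) < k then
      Y ⟨(c : ℕ), hc⟩ i * (if i = z then 0 else -(σ i * Real.sin (σ i * t)))
    else 0 with hCF'
  set SF' : Fin (k+1) → Fin k → ℝ := fun c i =>
    if hc : (c : ℕ) < k then
      Y ⟨(c : ℕ), hc⟩ i * (if i = z then 0 else σ i * Real.cos (σ i * t))
    else 0 with hSF'
  have hB'col : ∀ (r : Fin n) (c : Fin (k+1)),
      B' t r c = ∑ i, (CF' c i * V r i + SF' c i * U r i) := by
    intro r c
    refine (hB' t r c).unique ?_
    by_cases hc : (c : ℕ) < k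
    · have hfun : (fun s => B s r c) = fun s => Y ⟨(c : ℕ), hc⟩ z * V r z
          + ∑ i ∈ Finset.univ.erase z, (Real.cos (σ i * s) * (Y ⟨(c : ℕ), hc⟩ i * V r i)
              + Real.sin (σ i * s) * (Y ⟨(c : ℕ), hc⟩ i * U r i)) :=
        funext fun s => hz0 s r c hc
      rw [hfun]
      have hval : ∑ i, (CF' c i * V r i + SF' c i * U r i)
          = ∑ i ∈ Finset.univ.erase z,
              ((-(σ i * Real.sin (σ i * t)) * (Y ⟨(c : ℕ), hc⟩ i * V r i))
                + (σ i * Real.cos (σ i * t)) * (Y ⟨(c : ℕ), hc⟩ i * U r i)) := by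
        rw [← Finset.add_sum_erase _ _ (Finset.mem_univ z)]
        have h0 : CF' c z * V r z + SF' c z * U r z = 0 := by simp [hCF', hSF', hc]
        rw [h0, zero_add]
        refine Finset.sum_congr rfl fun i hi => ?_
        have hiz : i ≠ z := Finset.ne_of_mem_erase hi
        simp only [hCF', hSF', dif_pos hc, if_neg hiz]
        ring
      rw [hval]
      have hder : ∀ i ∈ Finset.univ.erase z,
          HasDerivAt (fun s => Real.cos (σ i * s) * (Y ⟨(c : ℕ), hc⟩ i * V r i)
              + Real.sin (σ i * s) * (Y ⟨(c : ℕ), hc⟩ i * U r i))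
            ((-(σ i * Real.sin (σ i * t)) * (Y ⟨(c : ℕ), hc⟩ i * V r i))
              + (σ i * Real.cos (σ i * t)) * (Y ⟨(c : ℕ), hc⟩ i * U r i)) t := by
        intro i _
        have hlin : HasDerivAt (fun s : ℝ => σ i * s) (σ i) t := by
          simpa using (hasDerivAt_id t).const_mul (σ i)
        have hcos : HasDerivAt (fun s => Real.cos (σ i * s)) (-(σ i * Real.sin (σ i * t))) t := by
          have h : HasDerivAt (fun s => Real.cos (σ i * s)) (-Real.sin (σ i * t) * σ i) t :=
            (Real.hasDerivAt_cos (σ i * t)).comp t hlin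
          have he : -(σ i * Real.sin (σ i * t)) = -Real.sin (σ i * t) * σ i := by ring
          rw [he]; exact h
        have hsin : HasDerivAt (fun s => Real.sin (σ i * s)) (σ i * Real.cos (σ i * t)) t := by
          have h : HasDerivAt (fun s => Real.sin (σ i * s)) (Real.cos (σ i * t) * σ i) t :=
            (Real.hasDerivAt_sin (σ i * t)).comp t hlin
          have he : σ i * Real.cos (σ i * t) = Real.cos (σ i * t) * σ i := by ring
          rw [he]; exact h
        exact (hcos.mul_const _).add (hsin.mul_const _)
      exact (HasDerivAt.fun_sum hder).const_add _
    · have hfun : (fun s => B s r c) = fun _ => U r z := funext fun s => by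
        rw [hBdef]; simp only [Matrix.of_apply]; rw [dif_neg hc]
      rw [hfun]
      have hval : ∑ i, (CF' c i * V r i + SF' c i * U r i) = 0 := by
        simp [hCF', hSF', hc]
      rw [hval]
      exact hasDerivAt_const t _
  -- Part 1: orthonormal columns
  have h1 : (B t)ᵀ * B t = 1 := by
    ext c d
    rw [Matrix.mul_apply]
    simp only [Matrix.transpose_apply, hBcol t]
    rw [key]
    by_cases hc : (c : ℕ) < k <;> by_cases hd : (d : ℕ) < k
    · have hterm : ∀ i, CF t c i * CF t d i + SF t c i * SF t d i
          = Y ⟨(c : ℕ), hc⟩ i * Y ⟨(d : ℕ), hd⟩ i := by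
        intro i
        by_cases hiz : i = z
        · simp [hCF, hSF, hc, hd, hiz]
        · simp only [hCF, hSF, dif_pos hc, dif_pos hd, if_neg hiz]
          have hpy := Real.sin_sq_add_cos_sq (σ i * t)
          linear_combination (Y ⟨(c : ℕ), hc⟩ i * Y ⟨(d : ℕ), hd⟩ i) * hpy
      rw [Finset.sum_congr rfl fun i _ => hterm i, hYr]
      by_cases hcd : c = d
      · subst hcd; simp
      · have hne : (⟨(c : ℕ), hc⟩ : Fin k) ≠ ⟨(d : ℕ), hd⟩ := by
          intro h
          rw [Fin.mk.injEq] at h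
          exact hcd (Fin.ext h)
        rw [if_neg hne, Matrix.one_apply_ne hcd]
    · have hterm : ∀ i, CF t c i * CF t d i + SF t c i * SF t d i = 0 := by
        intro i
        by_cases hiz : i = z <;> simp [hCF, hSF, hc, hd, hiz]
      rw [Finset.sum_congr rfl fun i _ => hterm i]
      have hne : c ≠ d := fun h => hd (by rw [← h]; exact hc)
      simp [Matrix.one_apply_ne hne]
    · have hterm : ∀ i, CF t c i * CF t d i + SF t c i * SF t d i = 0 := by
        intro i
        by_cases hiz : i = z <;> simp [hCF, hSF, hc, hd, hiz]
      rw [Finset.sum_congr rfl fun i _ => hterm i]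
      have hne : c ≠ d := fun h => hc (by rw [h]; exact hd)
      simp [Matrix.one_apply_ne hne]
    · have hcd : c = d := by
        have h1 := c.isLt
        have h2 := d.isLt
        exact Fin.ext (by omega)
      subst hcd
      have hterm : ∀ i, CF t c i * CF t c i + SF t c i * SF t c i
          = if i = z then 1 else 0 := by
        intro i
        by_cases hiz : i = z <;> simp [hCF, hSF, hc, hiz]
      rw [Finset.sum_congr rfl fun i _ => hterm i]
      simp [Matrix.one_apply]
  -- Part 2: speed
  have h2 : Matrix.trace ((B' t)ᵀ * B' t) = ∑ i ∈ Finset.univ.erase z, (σ i) ^ 2 := by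
    have htr : Matrix.trace ((B' t)ᵀ * B' t)
        = ∑ c : Fin (k+1), ∑ i, (CF' c i * CF' c i + SF' c i * SF' c i) := by
      have htr0 : Matrix.trace ((B' t)ᵀ * B' t)
          = ∑ c : Fin (k+1), ∑ r, B' t r c * B' t r c := by
        simp [Matrix.trace, Matrix.diag, Matrix.mul_apply, Matrix.transpose_apply]
      rw [htr0]
      refine Finset.sum_congr rfl fun c _ => ?_
      simp only [hB'col]
      exact key _ _ _ _
    rw [htr, Fin.sum_univ_castSucc]
    have hlast : ∑ i, (CF' (Fin.last k) i * CF' (Fin.last k) i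
        + SF' (Fin.last k) i * SF' (Fin.last k) i) = 0 := by
      have hl : ¬ ((Fin.last k : Fin (k+1)) : ℕ) < k := by simp
      simp [hCF', hSF', hl]
    rw [hlast, add_zero]
    have hcol : ∀ j : Fin k, ∑ i, (CF' (Fin.castSucc j) i * CF' (Fin.castSucc j) i
        + SF' (Fin.castSucc j) i * SF' (Fin.castSucc j) i)
        = ∑ i, (Y j i * Y j i) * (if i = z then 0 else σ i ^ 2) := by
      intro j
      refine Finset.sum_congr rfl fun i _ => ?_
      have hjc : ((Fin.castSucc j : Fin (k+1)) : ℕ) < k := by simpa using j.isLt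
      have hje : (⟨((Fin.castSucc j : Fin (k+1)) : ℕ), hjc⟩ : Fin k) = j := by
        ext; simp
      by_cases hiz : i = z
      · simp [hCF', hSF', hjc, hiz]
      · simp only [hCF', hSF', dif_pos hjc, if_neg hiz, hje]
        have hpy := Real.sin_sq_add_cos_sq (σ i * t)
        linear_combination (Y j i * Y j i * σ i ^ 2) * hpy
    rw [Finset.sum_congr rfl fun j _ => hcol j, Finset.sum_comm]
    have hcollapse : ∀ i : Fin k, ∑ j, (Y j i * Y j i) * (if i = z then 0 else σ i ^ 2)
        = (if i = z then 0 else σ i ^ 2) := by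
      intro i
      rw [← Finset.sum_mul, hYc, one_mul]
    rw [Finset.sum_congr rfl fun i _ => hcollapse i]
    rw [← Finset.add_sum_erase Finset.univ _ (Finset.mem_univ z), if_pos rfl, zero_add]
    exact Finset.sum_congr rfl fun i hi => if_neg (Finset.ne_of_mem_erase hi)
  refine ⟨h1, h2, ?_⟩
  rw [h2, Finset.sum_erase_eq_sub (Finset.mem_univ z)]
end

section
/- In the setting of the geodesic embedding construction — A₀, U real n×k matrices with A₀ᵀA₀ = I_k, UᵀU = I_k, A₀ᵀU = 0, Y real orthogonal k×k with columns y₁,…,y_k, u₁,…,u_k the columns of U, σ₁,…,σ_k ≥ 0, A(t) = A₀ Y cos(Σt) Yᵀ + U sin(Σt) Yᵀ, and B(t) the n×(k+1) matrix whose first block is A₀(y₁y₁ᵀ + Σ_{i=2}^{k} cos(σᵢt) yᵢyᵢᵀ) + Σ_{i=2}^{k} sin(σᵢt) uᵢyᵢᵀ and whose last column is u₁ — for every t one has ‖A(t)ᵀB(t)‖_F² = k; equivalently, all principal angles between the column spaces of A(t) and B(t) are zero, i.e. the column space of A(t) is contained in the column space of B(t). -/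
/-!
Write `G(c, s) = A₀ Y diag(c) Yᵀ + U diag(s) Yᵀ`, so that `A(t) = G(cos σt, sin σt)` and the first
block of `B(t)` is `G(c₀, s₀)`, where `c₀, s₀` put the first angle to zero. Orthonormality gives
`G(c, s)ᵀ G(c', s') = Y diag(c c' + s s') Yᵀ` and `G(c, s)ᵀ u₁ = s₁ y₁`, hence
`A(t)ᵀ B(t) = [Y D Yᵀ | s₁ y₁]` with `D = diag(c₁, 1, …, 1)`, whose squared Frobenius norm is
`c₁² + (k - 1) + s₁² = k`. The same identities show `A(t) = B(t) (A(t)ᵀ B(t))ᵀ`, so the column space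
of `A(t)` lies in that of `B(t)`.
-/

open Matrix Function

namespace Matrix

variable {m n ι R : Type*} [CommRing R]

section SnocCol

variable {k : ℕ}

def snocCol (P : Matrix m (Fin k) R) (u : m → R) : Matrix m (Fin (k + 1)) R :=
  of fun r => Fin.snoc (P r) (u r)

theorem mul_snocCol [Fintype m] (M : Matrix n m R) (P : Matrix m (Fin k) R) (u : m → R) :
    M * snocCol P u = snocCol (M * P) (M *ᵥ u) := by
  ext r c
  refine Fin.lastCases ?_ (fun i => ?_) c <;> simp [snocCol, mul_apply, mulVec, dotProduct]

theorem snocCol_mul_transpose_snocCol (P : Matrix m (Fin k) R) (u : m → R)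
    (Q : Matrix n (Fin k) R) (w : n → R) :
    snocCol P u * (snocCol Q w)ᵀ = P * Qᵀ + vecMulVec u w := by
  ext a b
  simp [snocCol, mul_apply, Fin.sum_univ_castSucc, vecMulVec_apply]

theorem trace_transpose_snocCol_mul_self [Fintype m] (P : Matrix m (Fin k) R) (u : m → R) :
    trace ((snocCol P u)ᵀ * snocCol P u) = trace (P * Pᵀ) + u ⬝ᵥ u := by
  rw [trace_mul_comm, snocCol_mul_transpose_snocCol, trace_add, trace_vecMulVec]

end SnocCol

section Diagonal

variable [Fintype ι] [DecidableEq ι]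

theorem mul_diagonal_mul_transpose (X : Matrix m ι R) (Y : Matrix n ι R) (f : ι → R) :
    X * diagonal f * Yᵀ = ∑ i, f i • vecMulVec (Xᵀ i) (Yᵀ i) := by
  ext a b
  simp [mul_apply, Matrix.sum_apply, vecMulVec_apply, diagonal_apply, mul_comm, mul_left_comm]

theorem mul_diagonal_update_mul_transpose (X : Matrix m ι R) (Y : Matrix n ι R) (f : ι → R)
    (z : ι) (a : R) :
    X * diagonal (update f z a) * Yᵀ
      = a • vecMulVec (Xᵀ z) (Yᵀ z) + ∑ i ∈ Finset.univ.erase z, f i • vecMulVec (Xᵀ i) (Yᵀ i) := by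
  rw [mul_diagonal_mul_transpose, ← Finset.add_sum_erase _ _ (Finset.mem_univ z), update_self]
  congr 1
  exact Finset.sum_congr rfl fun i hi => by rw [update_of_ne (Finset.ne_of_mem_erase hi)]

variable {Y : Matrix n ι R}

theorem transpose_conj_diagonal (d : ι → R) : (Y * diagonal d * Yᵀ)ᵀ = Y * diagonal d * Yᵀ := by
  simp only [transpose_mul, transpose_transpose, diagonal_transpose, Matrix.mul_assoc]

variable [Fintype n]

theorem conj_diagonal_mul_conj_diagonal (hY : Yᵀ * Y = 1) (d d' : ι → R) :
    Y * diagonal d * Yᵀ * (Y * diagonal d' * Yᵀ) = Y * diagonal (d * d') * Yᵀ := by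
  simp only [Matrix.mul_assoc, ← Matrix.mul_assoc Yᵀ Y, hY, Matrix.one_mul,
    ← Matrix.mul_assoc (diagonal d), diagonal_mul_diagonal']
  rfl

theorem trace_conj_diagonal (hY : Yᵀ * Y = 1) (d : ι → R) :
    trace (Y * diagonal d * Yᵀ) = ∑ i, d i := by
  rw [trace_mul_comm, ← Matrix.mul_assoc, hY, Matrix.one_mul, trace_diagonal]

end Diagonal

section RotatedFrame

variable [Fintype ι] [DecidableEq ι] {A0 U : Matrix m ι R} {Y : Matrix ι ι R}

def rotatedFrame (A0 U : Matrix m ι R) (Y : Matrix ι ι R) (c s : ι → R) : Matrix m ι R :=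
  A0 * Y * diagonal c * Yᵀ + U * diagonal s * Yᵀ

theorem rotatedFrame_mul_conj_diagonal (hY : Yᵀ * Y = 1) (c s d : ι → R) :
    rotatedFrame A0 U Y c s * (Y * diagonal d * Yᵀ) = rotatedFrame A0 U Y (c * d) (s * d) := by
  simp only [rotatedFrame, Matrix.add_mul, Matrix.mul_assoc, ← Matrix.mul_assoc Yᵀ Y, hY,
    Matrix.one_mul, ← Matrix.mul_assoc (diagonal _) (diagonal d), diagonal_mul_diagonal']
  rfl

theorem rotatedFrame_eq_update_add (c s : ι → R) (z : ι) :
    rotatedFrame A0 U Y c s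
      = rotatedFrame A0 U Y c (update s z 0) + s z • vecMulVec (Uᵀ z) (Yᵀ z) := by
  conv_lhs => rw [rotatedFrame, ← update_eq_self z s]
  rw [rotatedFrame, mul_diagonal_update_mul_transpose, mul_diagonal_update_mul_transpose,
    zero_smul, zero_add, add_comm (s z • _), add_assoc]

variable [Fintype m]

theorem transpose_rotatedFrame_mul (hU : Uᵀ * U = 1) (hAU : A0ᵀ * U = 0) (c s : ι → R) :
    (rotatedFrame A0 U Y c s)ᵀ * U = Y * diagonal s := by
  simp only [rotatedFrame, transpose_add, transpose_mul, transpose_transpose, diagonal_transpose,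
    Matrix.add_mul, Matrix.mul_assoc, hAU, hU, Matrix.mul_zero, Matrix.mul_one, zero_add]

theorem transpose_rotatedFrame_mul_rotatedFrame (hA0 : A0ᵀ * A0 = 1) (hU : Uᵀ * U = 1)
    (hAU : A0ᵀ * U = 0) (hY : Yᵀ * Y = 1) (c s c' s' : ι → R) :
    (rotatedFrame A0 U Y c s)ᵀ * rotatedFrame A0 U Y c' s'
      = Y * diagonal (c * c' + s * s') * Yᵀ := by
  have hUA : Uᵀ * A0 = 0 := by rw [← transpose_transpose (Uᵀ * A0), transpose_mul,
    transpose_transpose, hAU, transpose_zero]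
  simp only [rotatedFrame, transpose_add, transpose_mul, transpose_transpose, diagonal_transpose,
    Matrix.add_mul, Matrix.mul_add, Matrix.mul_assoc]
  simp only [← Matrix.mul_assoc A0ᵀ, ← Matrix.mul_assoc Uᵀ, ← Matrix.mul_assoc Yᵀ Y, hA0, hU,
    hAU, hUA, hY, Matrix.one_mul, Matrix.zero_mul, Matrix.mul_zero, add_zero, zero_add]
  simp only [← Matrix.mul_assoc (diagonal _) (diagonal _), diagonal_mul_diagonal',
    ← Matrix.mul_add, ← Matrix.add_mul, diagonal_add]
  rfl

end RotatedFrame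

section EmbeddedFrame

variable {k : ℕ} {A0 U : Matrix m (Fin k) R} {Y : Matrix (Fin k) (Fin k) R} {c s : Fin k → R}

def embeddedFrame (A0 U : Matrix m (Fin k) R) (Y : Matrix (Fin k) (Fin k) R) (c s : Fin k → R)
    (z : Fin k) : Matrix m (Fin (k + 1)) R :=
  snocCol (rotatedFrame A0 U Y (update c z 1) (update s z 0)) (Uᵀ z)

variable [Fintype m] (hA0 : A0ᵀ * A0 = 1) (hU : Uᵀ * U = 1) (hAU : A0ᵀ * U = 0)
  (hY : Yᵀ * Y = 1) (hcs : ∀ i, c i ^ 2 + s i ^ 2 = 1) (z : Fin k)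
include hA0 hU hAU hY hcs

theorem transpose_rotatedFrame_mul_embeddedFrame :
    (rotatedFrame A0 U Y c s)ᵀ * embeddedFrame A0 U Y c s z
      = snocCol (Y * diagonal (update (1 : Fin k → R) z (c z)) * Yᵀ) (s z • Yᵀ z) := by
  have hdiag : c * update c z 1 + s * update s z 0 = update (1 : Fin k → R) z (c z) := by
    funext i
    rcases eq_or_ne i z with rfl | hi
    · simp
    · simp [update_of_ne hi, ← hcs i, sq]
  have hcol : (rotatedFrame A0 U Y c s)ᵀ *ᵥ Uᵀ z = s z • Yᵀ z := by
    funext i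
    change ((rotatedFrame A0 U Y c s)ᵀ * U) i z = _
    simp [transpose_rotatedFrame_mul hU hAU, mul_comm]
  rw [embeddedFrame, mul_snocCol, transpose_rotatedFrame_mul_rotatedFrame hA0 hU hAU hY, hdiag,
    hcol]

theorem trace_gram_transpose_rotatedFrame_mul_embeddedFrame :
    trace (((rotatedFrame A0 U Y c s)ᵀ * embeddedFrame A0 U Y c s z)ᵀ
      * ((rotatedFrame A0 U Y c s)ᵀ * embeddedFrame A0 U Y c s z)) = k := by
  have hcol : Yᵀ z ⬝ᵥ Yᵀ z = 1 := (congrFun (congrFun hY z) z).trans (one_apply_eq z)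
  have hsum : ∑ i, (update (1 : Fin k → R) z (c z) * update (1 : Fin k → R) z (c z)) i
      = c z ^ 2 + (k - 1) := by
    have hsq : update (1 : Fin k → R) z (c z) * update (1 : Fin k → R) z (c z)
        = update (1 : Fin k → R) z (c z ^ 2) := by
      funext i
      rcases eq_or_ne i z with rfl | hi <;> simp [update_of_ne, *, sq]
    rw [hsq, Finset.sum_update_of_mem (Finset.mem_univ z)]
    simp [Finset.card_sdiff, Nat.cast_sub (Fin.pos z)]
  rw [transpose_rotatedFrame_mul_embeddedFrame hA0 hU hAU hY hcs, trace_transpose_snocCol_mul_self,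
    transpose_conj_diagonal, conj_diagonal_mul_conj_diagonal hY, trace_conj_diagonal hY, hsum,
    smul_dotProduct, dotProduct_smul, hcol]
  linear_combination hcs z

theorem rotatedFrame_eq_embeddedFrame_mul :
    rotatedFrame A0 U Y c s = embeddedFrame A0 U Y c s z
      * ((rotatedFrame A0 U Y c s)ᵀ * embeddedFrame A0 U Y c s z)ᵀ := by
  have hc : update c z 1 * update (1 : Fin k → R) z (c z) = c := by
    funext i
    rcases eq_or_ne i z with rfl | hi <;> simp [update_of_ne, *]
  have hs : update s z 0 * update (1 : Fin k → R) z (c z) = update s z 0 := by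
    funext i
    rcases eq_or_ne i z with rfl | hi <;> simp [update_of_ne, *]
  conv_lhs => rw [rotatedFrame_eq_update_add c s z]
  rw [transpose_rotatedFrame_mul_embeddedFrame hA0 hU hAU hY hcs, embeddedFrame,
    snocCol_mul_transpose_snocCol, transpose_conj_diagonal, rotatedFrame_mul_conj_diagonal hY, hc,
    hs, vecMulVec_smul]

theorem range_rotatedFrame_le_range_embeddedFrame :
    LinearMap.range (rotatedFrame A0 U Y c s).mulVecLin
      ≤ LinearMap.range (embeddedFrame A0 U Y c s z).mulVecLin := by
  rw [rotatedFrame_eq_embeddedFrame_mul hA0 hU hAU hY hcs z, mulVecLin_mul]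
  exact LinearMap.range_comp_le_range _ _

end EmbeddedFrame

end Matrix

open Real

theorem embedded_geodesic_contains_geodesic_general {n k : ℕ} (hk : 0 < k)
    (A0 U : Matrix (Fin n) (Fin k) ℝ) (Y : Matrix (Fin k) (Fin k) ℝ) (σ : Fin k → ℝ)
    (hA0 : A0ᵀ * A0 = 1) (hU : Uᵀ * U = 1) (hAU : A0ᵀ * U = 0) (hY : Yᵀ * Y = 1)
    (A : ℝ → Matrix (Fin n) (Fin k) ℝ)
    (hAdef : ∀ t, A t = A0 * Y * Matrix.diagonal (fun i => Real.cos (σ i * t)) * Yᵀ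
        + U * Matrix.diagonal (fun i => Real.sin (σ i * t)) * Yᵀ)
    (B : ℝ → Matrix (Fin n) (Fin (k + 1)) ℝ)
    (hBdef : ∀ t, B t = Matrix.of fun r (c : Fin (k + 1)) =>
      if hc : (c : ℕ) < k then
        (A0 * (Matrix.vecMulVec (fun a => Y a ⟨0, hk⟩) (fun a => Y a ⟨0, hk⟩)
            + ∑ i ∈ Finset.univ.erase (⟨0, hk⟩ : Fin k),
                Real.cos (σ i * t) • Matrix.vecMulVec (fun a => Y a i) (fun a => Y a i))
          + ∑ i ∈ Finset.univ.erase (⟨0, hk⟩ : Fin k),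
              Real.sin (σ i * t) • Matrix.vecMulVec (fun a => U a i) (fun a => Y a i))
          r ⟨(c : ℕ), hc⟩
      else U r ⟨0, hk⟩) :
    ∀ t, Matrix.trace (((A t)ᵀ * B t)ᵀ * ((A t)ᵀ * B t)) = (k : ℝ) ∧
      LinearMap.range (A t).mulVecLin ≤ LinearMap.range (B t).mulVecLin := by
  intro t
  have hcs : ∀ i, cos (σ i * t) ^ 2 + sin (σ i * t) ^ 2 = 1 := fun i => cos_sq_add_sin_sq _
  have hA : A t = rotatedFrame A0 U Y (fun i => cos (σ i * t)) (fun i => sin (σ i * t)) :=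
    hAdef t
  have hB : B t
      = embeddedFrame A0 U Y (fun i => cos (σ i * t)) (fun i => sin (σ i * t)) ⟨0, hk⟩ := by
    rw [hBdef t, embeddedFrame, rotatedFrame, Matrix.mul_assoc A0, Matrix.mul_assoc A0,
      mul_diagonal_update_mul_transpose, mul_diagonal_update_mul_transpose, one_smul, zero_smul,
      zero_add]
    rfl
  rw [hA, hB]
  exact ⟨trace_gram_transpose_rotatedFrame_mul_embeddedFrame hA0 hU hAU hY hcs _,
    range_rotatedFrame_le_range_embeddedFrame hA0 hU hAU hY hcs _⟩

/-- In the geodesic embedding construction, for every `t` one has `‖A(t)ᵀB(t)‖_F² = k`;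
equivalently all principal angles between the column spaces of `A(t)` and `B(t)` vanish,
i.e. the column space of `A(t)` is contained in the column space of `B(t)`. -/
theorem embedded_geodesic_contains_geodesic {n k : ℕ} (hk : 0 < k)
    (A0 U : Matrix (Fin n) (Fin k) ℝ) (Y : Matrix (Fin k) (Fin k) ℝ) (σ : Fin k → ℝ)
    (hA0 : A0ᵀ * A0 = 1) (hU : Uᵀ * U = 1) (hAU : A0ᵀ * U = 0) (hY : Yᵀ * Y = 1)
    (hσ : ∀ i, 0 ≤ σ i)
    (A : ℝ → Matrix (Fin n) (Fin k) ℝ)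
    (hAdef : ∀ t, A t = A0 * Y * Matrix.diagonal (fun i => Real.cos (σ i * t)) * Yᵀ
        + U * Matrix.diagonal (fun i => Real.sin (σ i * t)) * Yᵀ)
    (B : ℝ → Matrix (Fin n) (Fin (k + 1)) ℝ)
    (hBdef : ∀ t, B t = Matrix.of fun r (c : Fin (k + 1)) =>
      if hc : (c : ℕ) < k then
        (A0 * (Matrix.vecMulVec (fun a => Y a ⟨0, hk⟩) (fun a => Y a ⟨0, hk⟩)
            + ∑ i ∈ Finset.univ.erase (⟨0, hk⟩ : Fin k),
                Real.cos (σ i * t) • Matrix.vecMulVec (fun a => Y a i) (fun a => Y a i))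
          + ∑ i ∈ Finset.univ.erase (⟨0, hk⟩ : Fin k),
              Real.sin (σ i * t) • Matrix.vecMulVec (fun a => U a i) (fun a => Y a i))
          r ⟨(c : ℕ), hc⟩
      else U r ⟨0, hk⟩) :
    ∀ t, Matrix.trace (((A t)ᵀ * B t)ᵀ * ((A t)ᵀ * B t)) = (k : ℝ) ∧
      LinearMap.range (A t).mulVecLin ≤ LinearMap.range (B t).mulVecLin :=
  embedded_geodesic_contains_geodesic_general hk A0 U Y σ hA0 hU hAU hY A hAdef B hBdef
end
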